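/- Let O, E, B be nonempty axis-aligned bounding boxes in Euclidean space ℝ^r. If for every corner o' of O one has MaxDist(o', E) < MinDist(o', B), then for every point o ∈ O, every e ∈ E, and every b ∈ B one has dist(o, e) < dist(o, b). -/

import Mathlib

/-- Axis-aligned bounding box in `ℝ^r` with componentwise bounds `ℓ ≤ u`. -/
def AABB {r : ℕ} (ℓ u : EuclideanSpace ℝ (Fin r)) : Set (EuclideanSpace ℝ (Fin r)) :=
  {x | ∀ d, ℓ d ≤ x d ∧ x d ≤ u d}

/-- `c` is a corner of the AABB with bounds `ℓ`, `u`. -/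
def IsBoxCorner {r : ℕ} (ℓ u c : EuclideanSpace ℝ (Fin r)) : Prop :=
  ∀ d, c d = ℓ d ∨ c d = u d

/-- Minimum distance from a point to a set. -/
noncomputable def MinDist {r : ℕ} (p : EuclideanSpace ℝ (Fin r))
    (M : Set (EuclideanSpace ℝ (Fin r))) : ℝ :=
  sInf ((dist p) '' M)

/-- Maximum distance from a point to a set. -/
noncomputable def MaxDist {r : ℕ} (p : EuclideanSpace ℝ (Fin r))
    (M : Set (EuclideanSpace ℝ (Fin r))) : ℝ :=
  sSup ((dist p) '' M)



lemma distSqEqAux {r : ℕ} (x y : EuclideanSpace ℝ (Fin r)) :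
    dist x y = Real.sqrt (∑ d, (x d - y d) ^ 2) := by
  rw [EuclideanSpace.dist_eq]
  congr 1
  refine Finset.sum_congr rfl fun d _ => ?_
  rw [Real.dist_eq, sq_abs]

/-- If at every corner of `O` the maximum distance to `E` is below the minimum distance
to `B`, then all points of `O` are closer to all of `E` than to any of `B`. -/
theorem all_points_proximity_backward {r : ℕ}
    (ℓO uO ℓE uE ℓB uB : EuclideanSpace ℝ (Fin r))
    (hO : ∀ d, ℓO d ≤ uO d) (hE : ∀ d, ℓE d ≤ uE d) (hB : ∀ d, ℓB d ≤ uB d)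
    (h : ∀ o', IsBoxCorner ℓO uO o' → MaxDist o' (AABB ℓE uE) < MinDist o' (AABB ℓB uB)) :
    ∀ o ∈ AABB ℓO uO, ∀ e ∈ AABB ℓE uE, ∀ b ∈ AABB ℓB uB, dist o e < dist o b := by
  intro o ho e he b hb
  classical
  set c : EuclideanSpace ℝ (Fin r) := WithLp.toLp 2 (fun d => if 0 ≤ e d - b d then ℓO d else uO d) with hc
  have hcd : ∀ d, c d = if 0 ≤ e d - b d then ℓO d else uO d := fun d => rfl
  have hcorner : IsBoxCorner ℓO uO c := by
    intro d
    rw [hcd d]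
    by_cases hd : 0 ≤ e d - b d
    · exact Or.inl (by simp [hd])
    · exact Or.inr (by simp [hd])
  have hmax := h c hcorner
  have hbdd : BddAbove ((dist c) '' (AABB ℓE uE)) := by
    refine ⟨dist c ℓE + Real.sqrt (∑ d, (uE d - ℓE d) ^ 2), ?_⟩
    rintro y ⟨x, hx, rfl⟩
    have h1 : dist c x ≤ dist c ℓE + dist ℓE x := dist_triangle c ℓE x
    have h2 : dist ℓE x ≤ Real.sqrt (∑ d, (uE d - ℓE d) ^ 2) := by
      rw [distSqEqAux]
      apply Real.sqrt_le_sqrt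
      refine Finset.sum_le_sum fun d _ => ?_
      have := hx d
      nlinarith [this.1, this.2, hE d]
    linarith
  have h1 : dist c e ≤ MaxDist c (AABB ℓE uE) := le_csSup hbdd ⟨e, he, rfl⟩
  have h2 : MinDist c (AABB ℓB uB) ≤ dist c b := by
    refine csInf_le ⟨0, ?_⟩ ⟨b, hb, rfl⟩
    rintro y ⟨x, _, rfl⟩
    exact dist_nonneg
  have hce : dist c e < dist c b := lt_of_le_of_lt h1 (lt_of_lt_of_le hmax h2)
  have hsq : ∑ d, (c d - e d) ^ 2 < ∑ d, (c d - b d) ^ 2 := by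
    rw [distSqEqAux, distSqEqAux] at hce
    have hnn : 0 ≤ ∑ d, (c d - e d) ^ 2 :=
      Finset.sum_nonneg fun d _ => sq_nonneg _
    exact (Real.sqrt_lt_sqrt_iff hnn).mp hce
  have key : ∀ d, (c d - b d) ^ 2 - (c d - e d) ^ 2 ≤ (o d - b d) ^ 2 - (o d - e d) ^ 2 := by
    intro d
    have hod := ho d
    by_cases hd : 0 ≤ e d - b d
    · have hcl : c d = ℓO d := by rw [hcd d]; simp [hd]
      nlinarith [hod.1, hod.2]
    · have hcu : c d = uO d := by rw [hcd d]; simp [hd]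
      push_neg at hd
      nlinarith [hod.1, hod.2]
  have hsum : ∑ d, (o d - e d) ^ 2 < ∑ d, (o d - b d) ^ 2 := by
    have hA := Finset.sum_le_sum (fun d (_ : d ∈ Finset.univ) => key d)
    rw [Finset.sum_sub_distrib, Finset.sum_sub_distrib] at hA
    linarith
  rw [distSqEqAux, distSqEqAux]
  exact Real.sqrt_lt_sqrt (Finset.sum_nonneg fun d _ => sq_nonneg _) hsum
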